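/- arXiv:1605.01962 — 2 statements merged into one kernel-verified Lean document; each statement's English description precedes it below -/
import Mathlib

section
/- Let δ : R → R be a k-linear derivation of the tensor algebra R = T(V), and let q ≥ 0 be such that δ(ι(v)) ∈ Sym^q(L) for every v ∈ V. (i) If q > 1, then for every p ≥ 1, δ(Sym^p(L)) ⊆ Σ_{r ≤ p+q−1} Sym^r(L) (the sum of the submodules Sym^r(L) over r ≤ p+q−1). (ii) If q ≤ 1, then for every p ≥ 1, δ(Sym^p(L)) ⊆ Sym^{p+q−1}(L). -/
/-!
`R = T(V)` is the tensor algebra of a vector space `V` over a field `k` of characteristic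
zero; `freeLie k V` is the smallest Lie subalgebra of `R` (with the commutator bracket)
containing the image of `ι : V → R`, and `symL k V p` is the `k`-linear span of the
symmetrized products `s(β₁,…,β_p) = ∑_{σ ∈ S_p} β_{σ(1)} ⋯ β_{σ(p)}` with `βᵢ ∈ L`
(for `p = 0` this is `k·1`).
-/

noncomputable section

variable (k : Type*) [Field k] [CharZero k] (V : Type*) [AddCommGroup V] [Module k V]

attribute [local instance 100] LieRing.ofAssociativeRing

/-- The free Lie subalgebra `L` of the tensor algebra generated by `V`. -/
def freeLie : LieSubalgebra k (TensorAlgebra k V) :=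
  LieSubalgebra.lieSpan k (TensorAlgebra k V) (Set.range (TensorAlgebra.ι k (M := V)))

/-- `Sym^p(L)`: the span of the symmetrized products of `p` elements of `L`. -/
def symL (p : ℕ) : Submodule k (TensorAlgebra k V) :=
  Submodule.span k
    { x | ∃ β : Fin p → freeLie k V,
        x = ∑ σ : Equiv.Perm (Fin p),
              (List.ofFn fun i => ((β (σ i) : TensorAlgebra k V))).prod }

section Aux
variable {k V}
set_option linter.unusedSectionVars false

local notation "R" => TensorAlgebra k V

def SS {n : ℕ} (h : Fin n → R) : R :=
  ∑ σ : Equiv.Perm (Fin n), (List.ofFn fun m => h (σ m)).prod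

lemma SS_zero (h : Fin 0 → R) : SS h = 1 := by
  simp [SS, List.ofFn_zero]

lemma SS_comp_perm {n : ℕ} (h : Fin n → R) (π : Equiv.Perm (Fin n)) :
    SS (h ∘ π) = SS h := by
  unfold SS
  apply Fintype.sum_equiv (Equiv.mulLeft π)
  intro σ
  have : (fun m => (h ∘ ⇑π) (σ m)) = fun m => h ((Equiv.mulLeft π σ) m) := by
    funext m; simp [Equiv.Perm.mul_apply]
  rw [this]

lemma exists_comp_perm {m N : ℕ} {f₁ f₂ : Fin m → Fin N}
    (h₁ : Function.Injective f₁) (h₂ : Function.Injective f₂)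
    (hr : Set.range f₁ = Set.range f₂) :
    ∃ π : Equiv.Perm (Fin m), f₁ ∘ π = f₂ := by
  have hg : ∀ j, f₂ j ∈ Set.range f₁ := by
    intro j; rw [hr]; exact Set.mem_range_self j
  let g : Fin m → Fin m := fun j => (Equiv.ofInjective f₁ h₁).symm ⟨f₂ j, hg j⟩
  have hfg : ∀ j, f₁ (g j) = f₂ j := by
    intro j
    have : (Equiv.ofInjective f₁ h₁) (g j) = ⟨f₂ j, hg j⟩ := by
      simp [g]
    simpa [Equiv.ofInjective_apply] using congrArg Subtype.val this
  have hginj : Function.Injective g := by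
    intro a b hab
    apply h₂
    rw [← hfg a, ← hfg b, hab]
  refine ⟨Equiv.ofBijective g ((Finite.injective_iff_bijective).mp hginj), ?_⟩
  funext j
  exact hfg j

lemma SS_comp_range {m n : ℕ} (h : Fin n → R) {f₁ f₂ : Fin m → Fin n}
    (h₁ : Function.Injective f₁) (h₂ : Function.Injective f₂)
    (hr : Set.range f₁ = Set.range f₂) :
    SS (h ∘ f₁) = SS (h ∘ f₂) := by
  obtain ⟨π, hπ⟩ := exists_comp_perm h₁ h₂ hr
  calc SS (h ∘ f₁) = SS ((h ∘ f₁) ∘ π) := (SS_comp_perm _ π).symm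
  _ = SS (h ∘ f₂) := by rw [Function.comp_assoc, hπ]

end Aux

section Aux2
variable {k V}
set_option linter.unusedSectionVars false

local notation "R" => TensorAlgebra k V

lemma delta_one (δ : R →ₗ[k] R)
    (hder : ∀ a b : R, δ (a * b) = δ a * b + a * δ b) : δ 1 = 0 := by
  have h := hder 1 1
  rw [mul_one, mul_one, one_mul] at h
  exact (left_eq_add.mp h)

lemma delta_prod (δ : R →ₗ[k] R)
    (hder : ∀ a b : R, δ (a * b) = δ a * b + a * δ b) :
    ∀ (n : ℕ) (h : Fin n → R),
      δ (List.ofFn h).prod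
        = ∑ j : Fin n, (List.ofFn fun m => if m = j then δ (h m) else h m).prod := by
  intro n
  induction n with
  | zero => intro h; simp [delta_one δ hder]
  | succ n ih =>
    intro h
    rw [List.ofFn_succ, List.prod_cons, hder, ih (fun m => h m.succ), Fin.sum_univ_succ]
    congr 1
    · have e1 : (fun m : Fin n => if m.succ = (0 : Fin (n+1)) then δ (h m.succ) else h m.succ)
          = fun m : Fin n => h m.succ := by
        funext m; rw [if_neg (Fin.succ_ne_zero m)]
      rw [List.ofFn_succ, List.prod_cons, if_pos rfl, e1]
    · rw [Finset.mul_sum]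
      apply Finset.sum_congr rfl
      intro j _
      rw [List.ofFn_succ, List.prod_cons, if_neg (Fin.succ_ne_zero j).symm]
      have e2 : (fun m : Fin n => if m.succ = j.succ then δ (h m.succ) else h m.succ)
          = fun m : Fin n => if m = j then δ (h m.succ) else h m.succ := by
        funext m; simp [Fin.succ_inj]
      rw [e2]

lemma delta_SS (δ : R →ₗ[k] R)
    (hder : ∀ a b : R, δ (a * b) = δ a * b + a * δ b)
    {n : ℕ} (h : Fin n → R) :
    δ (SS h) = ∑ i : Fin n, SS (Function.update h i (δ (h i))) := by
  unfold SS
  rw [map_sum]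
  have key : ∀ σ : Equiv.Perm (Fin n),
      δ (List.ofFn fun m => h (σ m)).prod
        = ∑ i : Fin n, (List.ofFn fun m => Function.update h i (δ (h i)) (σ m)).prod := by
    intro σ
    rw [delta_prod δ hder n (fun m => h (σ m))]
    rw [← Equiv.sum_comp σ
      (fun i => (List.ofFn fun m => Function.update h i (δ (h i)) (σ m)).prod)]
    apply Finset.sum_congr rfl
    intro j _
    have e : (fun m => if m = j then δ (h (σ m)) else h (σ m))
        = fun m => Function.update h (σ j) (δ (h (σ j))) (σ m) := by
      funext m
      rw [Function.update_apply]
      by_cases hmj : m = j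
      · subst hmj
        rw [if_pos rfl, if_pos rfl]
      · rw [if_neg hmj, if_neg (fun hc => hmj (σ.injective hc))]
    rw [e]
  rw [Finset.sum_congr rfl (fun σ _ => key σ), Finset.sum_comm]

lemma prod_ofFn_smul :
    ∀ (n : ℕ) (f : Fin n → R) (j : Fin n) (c : k) (y : R),
      (List.ofFn (Function.update f j (c • y))).prod
        = c • (List.ofFn (Function.update f j y)).prod := by
  intro n
  induction n with
  | zero => intro f j; exact j.elim0
  | succ n ih =>
    intro f j c y
    induction j using Fin.cases with
    | zero =>
      rw [List.ofFn_succ, List.ofFn_succ, List.prod_cons, List.prod_cons,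
        Function.update_self, Function.update_self]
      have ht : ∀ z : R, (fun m : Fin n => Function.update f 0 z m.succ) = fun m => f m.succ := by
        intro z; funext m; rw [Function.update_of_ne (Fin.succ_ne_zero m)]
      rw [ht, ht, smul_mul_assoc]
    | succ j' =>
      rw [List.ofFn_succ, List.ofFn_succ, List.prod_cons, List.prod_cons,
        Function.update_of_ne (Fin.succ_ne_zero j').symm,
        Function.update_of_ne (Fin.succ_ne_zero j').symm]
      have ht : ∀ z : R, (fun m : Fin n => Function.update f j'.succ z m.succ)
          = Function.update (fun m : Fin n => f m.succ) j' z := by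
        intro z; funext m
        rw [Function.update_apply, Function.update_apply]
        simp [Fin.succ_inj]
      rw [ht, ht, ih, mul_smul_comm]

lemma SS_update_smul {n : ℕ} (h : Fin n → R) (i : Fin n) (c : k) (y : R) :
    SS (Function.update h i (c • y)) = c • SS (Function.update h i y) := by
  unfold SS
  rw [Finset.smul_sum]
  apply Finset.sum_congr rfl
  intro σ _
  have hrw : ∀ z : R, (fun m => Function.update h i z (σ m))
      = Function.update ((Function.update h i y) ∘ σ) (σ.symm i) z := by
    intro z; funext m
    rw [Function.update_apply, Function.update_apply, Function.comp_apply,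
      Function.update_apply]
    by_cases hmi : σ m = i
    · rw [if_pos hmi, if_pos (σ.eq_symm_apply.mpr hmi)]
    · rw [if_neg hmi, if_neg (fun hc => hmi (σ.eq_symm_apply.mp hc)), if_neg hmi]
  have h4 : Function.update ((Function.update h i y) ∘ σ) (σ.symm i) y
      = (Function.update h i y) ∘ σ := by
    funext m
    rw [Function.update_apply]
    by_cases hm : m = σ.symm i
    · subst hm
      rw [if_pos rfl, Function.comp_apply, Equiv.apply_symm_apply, Function.update_self]
    · rw [if_neg hm]
  rw [hrw (c • y), prod_ofFn_smul _ _ _ c y, h4]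
  rfl

end Aux2

section Aux3
variable {k V}
set_option linter.unusedSectionVars false

local notation "R" => TensorAlgebra k V

lemma range_swap_succ {n : ℕ} (a : Fin (n+1)) :
    Set.range (fun m : Fin n => (Equiv.swap 0 a) m.succ) = {a}ᶜ := by
  ext z
  simp only [Set.mem_range, Set.mem_compl_iff, Set.mem_singleton_iff]
  constructor
  · rintro ⟨m, hm⟩ hz
    subst hz
    have : m.succ = Equiv.swap 0 z z := (Equiv.swap_apply_eq_iff).mp hm
    rw [Equiv.swap_apply_right] at this
    exact Fin.succ_ne_zero m this
  · intro hz
    have hw : Equiv.swap 0 a z ≠ 0 := by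
      intro hc
      have : z = Equiv.swap 0 a 0 := (Equiv.swap_apply_eq_iff).mp hc
      rw [Equiv.swap_apply_left] at this
      exact hz this
    obtain ⟨m, hm⟩ := Fin.exists_succ_eq.mpr hw
    exact ⟨m, by rw [hm, Equiv.swap_apply_self]⟩

lemma range_succAbove_comp {n : ℕ} (x : Fin (n+2)) (y : Fin (n+1)) :
    Set.range (fun t : Fin n => x.succAbove (y.succAbove t))
      = ({x, x.succAbove y}ᶜ : Set (Fin (n+2))) := by
  ext z
  simp only [Set.mem_range, Set.mem_compl_iff, Set.mem_insert_iff, Set.mem_singleton_iff]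
  push_neg
  constructor
  · rintro ⟨t, rfl⟩
    exact ⟨Fin.succAbove_ne x _, fun hc => Fin.succAbove_ne y t
      (Fin.succAbove_right_injective hc)⟩
  · rintro ⟨hzx, hzy⟩
    obtain ⟨u, hu⟩ := Fin.exists_succAbove_eq hzx
    have hu_ne : u ≠ y := by
      rintro rfl
      exact hzy hu.symm
    obtain ⟨t, ht⟩ := Fin.exists_succAbove_eq hu_ne
    exact ⟨t, by rw [ht, hu]⟩

lemma SS_rec {n : ℕ} (h : Fin (n+1) → R) :
    SS h = ∑ a : Fin (n+1), h a * SS (h ∘ a.succAbove) := by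
  unfold SS
  rw [← Equiv.sum_comp (Equiv.Perm.decomposeFin.symm)
    (fun σ => (List.ofFn fun m => h (σ m)).prod), Fintype.sum_prod_type]
  apply Finset.sum_congr rfl
  intro a _
  have hterm : ∀ τ : Equiv.Perm (Fin n),
      (List.ofFn fun m => h ((Equiv.Perm.decomposeFin.symm (a, τ)) m)).prod
        = h a * (List.ofFn fun m =>
            (h ∘ (fun i : Fin n => Equiv.swap 0 a i.succ)) (τ m)).prod := by
    intro τ
    rw [List.ofFn_succ, List.prod_cons, Equiv.Perm.decomposeFin_symm_apply_zero]
    have e : (fun i : Fin n => h ((Equiv.Perm.decomposeFin.symm (a, τ)) i.succ))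
        = fun m => (h ∘ (fun i : Fin n => Equiv.swap 0 a i.succ)) (τ m) := by
      funext m
      rw [Equiv.Perm.decomposeFin_symm_apply_succ]
      rfl
    rw [e]
  rw [Finset.sum_congr rfl (fun τ _ => hterm τ), ← Finset.mul_sum]
  congr 1
  have hinj : Function.Injective (fun i : Fin n => Equiv.swap 0 a i.succ) :=
    (Equiv.injective _).comp (Fin.succ_injective n)
  have := SS_comp_range (k := k) (V := V) h hinj (Fin.succAbove_right_injective (p := a))
    (by rw [range_swap_succ, Fin.range_succAbove])
  exact this

lemma SS_ins : ∀ (n : ℕ) (v : Fin (n+1) → R) (i : Fin (n+1)), v i = 1 →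
    SS v = (n+1) • SS (v ∘ i.succAbove) := by
  intro n
  induction n with
  | zero =>
    intro v i hvi
    rw [SS_rec v, Fin.sum_univ_one, SS_zero, SS_zero, mul_one,
      show (0 : Fin 1) = i from Subsingleton.elim _ _, hvi]
    simp
  | succ n ih =>
    intro v i hvi
    rw [SS_rec v, Fin.sum_univ_succAbove _ i, hvi, one_mul]
    have hstep : ∀ b : Fin (n+1),
        v (i.succAbove b) * SS (v ∘ (i.succAbove b).succAbove)
          = (n+1) • ((v ∘ i.succAbove) b
              * SS ((v ∘ i.succAbove) ∘ b.succAbove)) := by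
      intro b
      set a := i.succAbove b with ha
      have hne : i ≠ a := (Fin.succAbove_ne i b).symm
      obtain ⟨j, hj⟩ := Fin.exists_succAbove_eq hne
      have h1 : (v ∘ a.succAbove) j = 1 := by
        simp only [Function.comp_apply, hj, hvi]
      rw [ih (v ∘ a.succAbove) j h1]
      have h2 : SS ((v ∘ a.succAbove) ∘ j.succAbove)
          = SS ((v ∘ i.succAbove) ∘ b.succAbove) := by
        refine SS_comp_range (f₁ := fun t => a.succAbove (j.succAbove t))
          (f₂ := fun t => i.succAbove (b.succAbove t)) v
          (Fin.succAbove_right_injective.comp Fin.succAbove_right_injective)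
          (Fin.succAbove_right_injective.comp Fin.succAbove_right_injective) ?_
        rw [range_succAbove_comp, range_succAbove_comp, hj, ← ha, Set.pair_comm]
      rw [h2, mul_smul_comm]
      rfl
    rw [Finset.sum_congr rfl (fun b _ => hstep b), ← Finset.smul_sum, ← SS_rec (v ∘ i.succAbove)]
    conv_rhs => rw [succ_nsmul]
    rw [add_comm]
end Aux3

section Aux4
variable {k V}
set_option linter.unusedSectionVars false

local notation "R" => TensorAlgebra k V

def Fset (n : ℕ) : Set R :=
  {x | ∃ l : List R, (∀ a ∈ l, a ∈ freeLie k V) ∧ l.length ≤ n ∧ x = l.prod}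

def FF (n : ℕ) : Submodule k R := Submodule.span k (Fset n)

lemma FF_mono {m n : ℕ} (hmn : m ≤ n) : (FF m : Submodule k R) ≤ FF n :=
  Submodule.span_mono (fun _ ⟨l, h1, h2, h3⟩ => ⟨l, h1, h2.trans hmn, h3⟩)

lemma one_mem_FF (n : ℕ) : (1 : R) ∈ FF n :=
  Submodule.subset_span ⟨[], by simp, by simp, by simp⟩

lemma mem_FF_one {x : R} (hx : x ∈ freeLie k V) : x ∈ FF 1 :=
  Submodule.subset_span ⟨[x], by simpa using hx, by simp, by simp⟩

lemma list_prod_mem_FF {l : List R} (hl : ∀ a ∈ l, a ∈ freeLie k V) :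
    l.prod ∈ FF l.length :=
  Submodule.subset_span ⟨l, hl, le_rfl, rfl⟩

lemma FF_mul {a b : ℕ} {x y : R} (hx : x ∈ FF a) (hy : y ∈ FF b) :
    x * y ∈ FF (a + b) := by
  have hle : (FF a : Submodule k R) * FF b ≤ FF (a + b) := by
    rw [FF, FF, Submodule.span_mul_span]
    apply Submodule.span_mono
    rintro z ⟨x, hx, y, hy, rfl⟩
    obtain ⟨l₁, hl₁, hlen₁, rfl⟩ := hx
    obtain ⟨l₂, hl₂, hlen₂, rfl⟩ := hy
    refine ⟨l₁ ++ l₂, ?_, ?_, by rw [List.prod_append]⟩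
    · intro a ha
      rcases List.mem_append.mp ha with h | h
      · exact hl₁ a h
      · exact hl₂ a h
    · rw [List.length_append]; omega
  exact hle (Submodule.mul_mem_mul hx hy)

lemma prod_ofFn_mem_FF :
    ∀ (n : ℕ) (c : Fin n → ℕ) (h : Fin n → R), (∀ m, h m ∈ FF (c m)) →
      (List.ofFn h).prod ∈ FF (∑ m, c m) := by
  intro n
  induction n with
  | zero => intro c h _; simpa using one_mem_FF 0
  | succ n ih =>
    intro c h hmem
    rw [List.ofFn_succ, List.prod_cons, Fin.sum_univ_succ]
    exact FF_mul (hmem 0) (ih _ _ fun m => hmem m.succ)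

lemma symL_le_FF (p : ℕ) : symL k V p ≤ FF p := by
  rw [symL, Submodule.span_le]
  rintro x ⟨β, rfl⟩
  apply sum_mem
  intro σ _
  apply Submodule.subset_span
  refine ⟨List.ofFn (fun i => ((β (σ i)) : R)), ?_, by simp, rfl⟩
  intro a ha
  obtain ⟨i, hi⟩ := List.mem_ofFn.mp ha
  rw [← hi]
  exact (β (σ i)).2

lemma finRange_map_perm {n : ℕ} (σ : Equiv.Perm (Fin n)) :
    ((List.finRange n).map σ).Perm (List.finRange n) := by
  apply List.perm_of_nodup_nodup_toFinset_eq
  · exact (List.nodup_finRange n).map σ.injective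
  · exact List.nodup_finRange n
  · ext x
    simp only [List.mem_toFinset, List.mem_map, List.mem_finRange, true_and,
      iff_true, and_true]
    exact ⟨σ.symm x, by simp⟩

lemma ofFn_comp_perm {n : ℕ} {α : Type*} (h : Fin n → α) (σ : Equiv.Perm (Fin n)) :
    (List.ofFn (fun m => h (σ m))).Perm (List.ofFn h) := by
  rw [List.ofFn_eq_map, List.ofFn_eq_map,
    show List.map (fun m => h (σ m)) (List.finRange n)
      = List.map h ((List.finRange n).map σ) from by rw [List.map_map]; rfl]
  exact (finRange_map_perm σ).map h

lemma perm_diff : ∀ {l₁ l₂ : List R}, l₁.Perm l₂ →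
    (∀ x ∈ l₁, x ∈ freeLie k V) → l₁.prod - l₂.prod ∈ FF (l₁.length - 1) := by
  intro l₁ l₂ hp
  induction hp with
  | nil => intro _; simpa using zero_mem _
  | cons x h ih =>
    rename_i t₁ t₂
    intro hmem
    rcases eq_or_ne t₁ [] with hnil | hnil
    · subst hnil
      rw [h.symm.eq_nil]
      simpa using zero_mem _
    · rw [List.prod_cons, List.prod_cons, ← mul_sub]
      have hx : x ∈ FF 1 := mem_FF_one (hmem x (by simp))
      have hd := ih (fun y hy => hmem y (List.mem_cons_of_mem _ hy))
      have hlen : (1 : ℕ) ≤ t₁.length := List.length_pos_iff.mpr hnil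
      have := FF_mul hx hd
      apply FF_mono (n := (x :: t₁).length - 1) (by simp; omega) this
  | swap a b l =>
    intro hmem
    rw [List.prod_cons, List.prod_cons, List.prod_cons, List.prod_cons,
      ← mul_assoc, ← mul_assoc, ← sub_mul]
    have h1 : b * a - a * b ∈ freeLie k V := by
      have := (freeLie k V).lie_mem (hmem b (by simp)) (hmem a (by simp))
      rwa [Ring.lie_def] at this
    have h2 : l.prod ∈ FF l.length :=
      list_prod_mem_FF (fun y hy => hmem y (by simp [hy]))
    have := FF_mul (mem_FF_one h1) h2
    apply FF_mono (n := (b :: a :: l).length - 1) (by simp; omega) this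
  | trans h₁ h₂ ih₁ ih₂ =>
    rename_i t₁ t₂ t₃
    intro hmem
    have e : t₁.prod - t₃.prod = (t₁.prod - t₂.prod) + (t₂.prod - t₃.prod) := by
      rw [sub_add_sub_cancel]
    rw [e]
    refine add_mem (ih₁ hmem) ?_
    have hmem₂ : ∀ y ∈ t₂, y ∈ freeLie k V := fun y hy => hmem y (h₁.symm.subset hy)
    have := ih₂ hmem₂
    rwa [← h₁.length_eq] at this

lemma SS_mem_symL {p : ℕ} (β : Fin p → freeLie k V) :
    SS (fun i => ((β i) : R)) ∈ symL k V p :=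
  Submodule.subset_span ⟨β, rfl⟩

lemma one_mem_symL0 : (1 : R) ∈ symL k V 0 := by
  apply Submodule.subset_span
  refine ⟨Fin.elim0, ?_⟩
  simp

lemma symL0_le : symL k V 0 ≤ Submodule.span k {(1 : R)} := by
  rw [symL, Submodule.span_le]
  rintro x ⟨β, rfl⟩
  have : (∑ σ : Equiv.Perm (Fin 0),
      (List.ofFn fun i => ((β (σ i)) : R)).prod) = 1 := by simp
  rw [this]
  exact Submodule.subset_span rfl

lemma symL1_le : symL k V 1 ≤ (freeLie k V).toSubmodule := by
  rw [symL, Submodule.span_le]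
  rintro x ⟨β, rfl⟩
  have : (∑ σ : Equiv.Perm (Fin 1),
      (List.ofFn fun i => ((β (σ i)) : R)).prod) = ((β 0) : R) := by
    rw [Finset.sum_eq_single 1 (fun σ _ _ => absurd (Subsingleton.elim σ 1) (by simp_all))
      (by simp)]
    simp [List.ofFn_succ]
  rw [this]
  exact (β 0).2

lemma FF_le_iSup : ∀ n : ℕ, (FF n : Submodule k R) ≤ ⨆ r ≤ n, symL k V r := by
  intro n
  induction n using Nat.strong_induction_on with
  | _ n ihn =>
    rw [FF, Submodule.span_le]
    rintro x ⟨l, hl, hlen, rfl⟩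
    rcases Nat.eq_zero_or_pos l.length with h0 | hpos
    · rw [List.length_eq_zero_iff.mp h0, List.prod_nil]
      exact Submodule.mem_iSup_of_mem 0 (Submodule.mem_iSup_of_mem (Nat.zero_le n)
        one_mem_symL0)
    · set m := l.length with hm
      set h : Fin m → R := l.get with hh
      have hofn : List.ofFn h = l := List.ofFn_get l
      have hmem_get : ∀ i : Fin m, h i ∈ freeLie k V := by
        intro i
        apply hl
        rw [← hofn]
        exact List.mem_ofFn.mpr ⟨i, rfl⟩
      set β : Fin m → freeLie k V := fun i => ⟨h i, hmem_get i⟩ with hβ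
      have hkey : ∀ σ : Equiv.Perm (Fin m),
          (List.ofFn fun mm => h (σ mm)).prod - l.prod ∈ FF (m - 1) := by
        intro σ
        have hp : (List.ofFn fun mm => h (σ mm)).Perm l := by
          rw [← hofn]; exact ofFn_comp_perm h σ
        have hmem : ∀ x ∈ List.ofFn fun mm => h (σ mm), x ∈ freeLie k V := by
          intro x hx
          exact hl x (hp.subset hx)
        have := perm_diff hp hmem
        rwa [List.length_ofFn] at this
      have hsum : SS h - (m.factorial : ℕ) • l.prod
          = ∑ σ : Equiv.Perm (Fin m), ((List.ofFn fun mm => h (σ mm)).prod - l.prod) := by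
        rw [Finset.sum_sub_distrib, Finset.sum_const, Finset.card_univ, Fintype.card_perm,
          Fintype.card_fin]
        rfl
      have hD : SS h - (m.factorial : ℕ) • l.prod ∈ FF (m - 1) := by
        rw [hsum]; exact sum_mem fun σ _ => hkey σ
      have hSS : SS h ∈ symL k V m := by
        have : h = fun i => ((β i) : R) := by funext i; rfl
        rw [this]; exact SS_mem_symL β
      have hfac : ((m.factorial : k)) ≠ 0 := by
        exact_mod_cast Nat.cast_ne_zero.mpr (Nat.factorial_ne_zero m)
      have hx : l.prod = (m.factorial : k)⁻¹ • (SS h - (SS h - (m.factorial : ℕ) • l.prod)) := by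
        rw [sub_sub_cancel, ← Nat.cast_smul_eq_nsmul k, inv_smul_smul₀ hfac]
      rw [hx]
      apply Submodule.smul_mem
      apply sub_mem
      · exact Submodule.mem_iSup_of_mem m (Submodule.mem_iSup_of_mem hlen hSS)
      · have hlt : m - 1 < n := by omega
        have hmem' := ihn (m - 1) hlt hD
        have hle : (⨆ r ≤ m - 1, symL k V r) ≤ ⨆ r ≤ n, symL k V r :=
          iSup₂_le fun r hr => le_iSup₂_of_le r (hr.trans (by omega)) le_rfl
        exact hle hmem'
end Aux4

section Aux5
variable {k V}
set_option linter.unusedSectionVars false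

local notation "R" => TensorAlgebra k V

lemma update_coe {p : ℕ} (β : Fin p → freeLie k V) (i : Fin p) (z : R)
    (hz : z ∈ freeLie k V) :
    Function.update (fun j => ((β j) : R)) i z
      = fun j => ((Function.update β i ⟨z, hz⟩ j : R)) := by
  funext j
  rw [Function.update_apply, Function.update_apply]
  by_cases hj : j = i
  · subst hj; simp
  · simp [hj]

lemma bracket_symL {q : ℕ} {x z : R} (hx : x ∈ freeLie k V) (hz : z ∈ symL k V q) :
    x * z - z * x ∈ symL k V q := by
  set adx : TensorAlgebra k V →ₗ[k] TensorAlgebra k V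
    := LinearMap.mulLeft k x - LinearMap.mulRight k x with had
  have hadx : ∀ w : R, adx w = x * w - w * x := by
    intro w; simp [had]
  have hder' : ∀ a b : R, adx (a * b) = adx a * b + a * adx b := by
    intro a b
    rw [hadx, hadx, hadx]
    noncomm_ring
  have hle : symL k V q ≤ Submodule.comap adx (symL k V q) := by
    apply Submodule.span_le.mpr
    rintro w ⟨β, rfl⟩
    rw [SetLike.mem_coe, Submodule.mem_comap]
    have e0 : (∑ σ : Equiv.Perm (Fin q),
        (List.ofFn fun i => ((β (σ i)) : R)).prod) = SS (fun i => ((β i) : R)) := rfl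
    rw [e0, delta_SS adx hder']
    apply sum_mem
    intro i _
    have hmem : adx ((β i : R)) ∈ freeLie k V := by
      rw [hadx, ← Ring.lie_def]
      exact (freeLie k V).lie_mem hx (β i).2
    rw [update_coe β i _ hmem]
    exact SS_mem_symL _
  have := hle hz
  rw [Submodule.mem_comap, hadx] at this
  exact this

lemma deltaL {q : ℕ} (δ : TensorAlgebra k V →ₗ[k] TensorAlgebra k V)
    (hder : ∀ a b : R, δ (a * b) = δ a * b + a * δ b)
    (hq : ∀ v : V, δ (TensorAlgebra.ι k v) ∈ symL k V q) :
    ∀ x ∈ freeLie k V, δ x ∈ symL k V q := by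
  have key : ∀ {x y : R},
      x ∈ (freeLie k V).toSubmodule ⊓ Submodule.comap δ (symL k V q) →
      y ∈ (freeLie k V).toSubmodule ⊓ Submodule.comap δ (symL k V q) →
      ⁅x, y⁆ ∈ (freeLie k V).toSubmodule ⊓ Submodule.comap δ (symL k V q) := by
    intro x y hx hy
    obtain ⟨hx1, hx2⟩ := Submodule.mem_inf.mp hx
    obtain ⟨hy1, hy2⟩ := Submodule.mem_inf.mp hy
    rw [Submodule.mem_comap] at hx2 hy2
    apply Submodule.mem_inf.mpr
    constructor
    · exact (freeLie k V).lie_mem hx1 hy1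
    · rw [Submodule.mem_comap]
      have e : δ ⁅x, y⁆ = (x * δ y - δ y * x) + -(y * δ x - δ x * y) := by
        rw [Ring.lie_def, map_sub, hder, hder]
        noncomm_ring
      rw [e]
      exact add_mem (bracket_symL hx1 hy2) (neg_mem (bracket_symL hy1 hx2))
  let K : LieSubalgebra k R :=
    { toSubmodule := (freeLie k V).toSubmodule ⊓ Submodule.comap δ (symL k V q),
      lie_mem' := key }
  have hK : freeLie k V ≤ K := by
    rw [freeLie]
    apply LieSubalgebra.lieSpan_le.mpr
    rintro _ ⟨v, rfl⟩
    show (TensorAlgebra.ι k v : R)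
      ∈ (freeLie k V).toSubmodule ⊓ Submodule.comap δ (symL k V q)
    apply Submodule.mem_inf.mpr
    refine ⟨?_, ?_⟩
    · exact LieSubalgebra.subset_lieSpan ⟨v, rfl⟩
    · rw [Submodule.mem_comap]
      exact hq v
  intro x hx
  have hxK : x ∈ (freeLie k V).toSubmodule ⊓ Submodule.comap δ (symL k V q) := hK hx
  exact Submodule.mem_comap.mp (Submodule.mem_inf.mp hxK).2

end Aux5


/-- If `δ : R → R` is a `k`-linear derivation of the tensor algebra with
`δ(ι v) ∈ Sym^q(L)` for all `v ∈ V`, then: (i) if `q > 1`, `δ(Sym^p(L)) ⊆ Σ_{r ≤ p+q−1} Sym^r(L)`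
for every `p ≥ 1`; (ii) if `q ≤ 1`, `δ(Sym^p(L)) ⊆ Sym^{p+q−1}(L)` for every `p ≥ 1`. -/
theorem statement2 (δ : TensorAlgebra k V →ₗ[k] TensorAlgebra k V)
    (hder : ∀ a b : TensorAlgebra k V, δ (a * b) = δ a * b + a * δ b)
    (q : ℕ) (hq : ∀ v : V, δ (TensorAlgebra.ι k v) ∈ symL k V q) :
    (1 < q → ∀ p : ℕ, 1 ≤ p → ∀ x ∈ symL k V p,
        δ x ∈ ⨆ r ≤ p + q - 1, symL k V r) ∧
    (q ≤ 1 → ∀ p : ℕ, 1 ≤ p → ∀ x ∈ symL k V p,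
        δ x ∈ symL k V (p + q - 1)) := by
  constructor
  · -- (i) q > 1
    intro hq1 p hp x hx
    obtain ⟨n, rfl⟩ : ∃ n, p = n + 1 := ⟨p - 1, by omega⟩
    have main : symL k V (n+1)
        ≤ Submodule.comap δ (⨆ r ≤ (n+1) + q - 1, symL k V r) := by
      apply Submodule.span_le.mpr
      rintro x ⟨β, rfl⟩
      rw [SetLike.mem_coe, Submodule.mem_comap]
      have e0 : (∑ σ : Equiv.Perm (Fin (n+1)),
          (List.ofFn fun i => ((β (σ i)) : TensorAlgebra k V)).prod)
            = SS (fun i => ((β i) : TensorAlgebra k V)) := rfl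
      rw [e0, delta_SS δ hder]
      apply sum_mem
      intro i _
      apply FF_le_iSup ((n+1) + q - 1)
      unfold SS
      apply sum_mem
      intro σ _
      have hmem := prod_ofFn_mem_FF (n+1) (fun m => if σ m = i then q else 1)
        (fun m => Function.update (fun j => ((β j) : TensorAlgebra k V)) i
          (δ ((β i) : TensorAlgebra k V)) (σ m)) ?_
      · have hsum : (∑ m : Fin (n+1), if σ m = i then q else 1) = (n+1) + q - 1 := by
          rw [Equiv.sum_comp σ (fun m => if m = i then q else 1),
            Fin.sum_univ_succAbove (fun m => if m = i then q else 1) i, if_pos rfl]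
          have : ∀ b : Fin n, (if i.succAbove b = i then q else 1) = 1 := by
            intro b; rw [if_neg (Fin.succAbove_ne i b)]
          rw [Finset.sum_congr rfl (fun b _ => this b), Finset.sum_const]
          simp
          omega
        rwa [hsum] at hmem
      · intro m
        rw [Function.update_apply]
        by_cases hm : σ m = i
        · rw [if_pos hm, if_pos hm]
          exact symL_le_FF q (deltaL δ hder hq _ (β i).2)
        · rw [if_neg hm, if_neg hm]
          exact mem_FF_one (β (σ m)).2
    exact Submodule.mem_comap.mp (main hx)
  · -- (ii) q ≤ 1
    intro hq1 p hp x hx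
    obtain ⟨n, rfl⟩ : ∃ n, p = n + 1 := ⟨p - 1, by omega⟩
    interval_cases q
    · -- q = 0
      have main : symL k V (n+1) ≤ Submodule.comap δ (symL k V ((n+1) + 0 - 1)) := by
        apply Submodule.span_le.mpr
        rintro x ⟨β, rfl⟩
        rw [SetLike.mem_coe, Submodule.mem_comap]
        have e0 : (∑ σ : Equiv.Perm (Fin (n+1)),
            (List.ofFn fun i => ((β (σ i)) : TensorAlgebra k V)).prod)
              = SS (fun i => ((β i) : TensorAlgebra k V)) := rfl
        rw [e0, delta_SS δ hder]
        apply sum_mem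
        intro i _
        have hy : δ ((β i : TensorAlgebra k V)) ∈ Submodule.span k {(1 : TensorAlgebra k V)} :=
          symL0_le (deltaL δ hder hq _ (β i).2)
        obtain ⟨c, hc⟩ := Submodule.mem_span_singleton.mp hy
        rw [← hc, SS_update_smul]
        apply Submodule.smul_mem
        have h1 : (Function.update (fun j => ((β j) : TensorAlgebra k V)) i 1) i = 1 :=
          Function.update_self i 1 _
        rw [SS_ins n _ i h1]
        apply nsmul_mem
        have he : (Function.update (fun j => ((β j) : TensorAlgebra k V)) i 1) ∘ i.succAbove
            = fun j => ((β (i.succAbove j)) : TensorAlgebra k V) := by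
          funext j
          simp only [Function.comp_apply]
          rw [Function.update_of_ne (Fin.succAbove_ne i j)]
        rw [he]
        exact SS_mem_symL (fun j => β (i.succAbove j))
      exact Submodule.mem_comap.mp (main hx)
    · -- q = 1
      have main : symL k V (n+1) ≤ Submodule.comap δ (symL k V ((n+1) + 1 - 1)) := by
        apply Submodule.span_le.mpr
        rintro x ⟨β, rfl⟩
        rw [SetLike.mem_coe, Submodule.mem_comap]
        have e0 : (∑ σ : Equiv.Perm (Fin (n+1)),
            (List.ofFn fun i => ((β (σ i)) : TensorAlgebra k V)).prod)
              = SS (fun i => ((β i) : TensorAlgebra k V)) := rfl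
        rw [e0, delta_SS δ hder]
        apply sum_mem
        intro i _
        have hz : δ ((β i : TensorAlgebra k V)) ∈ freeLie k V :=
          symL1_le (deltaL δ hder hq _ (β i).2)
        rw [update_coe β i _ hz]
        exact SS_mem_symL _
      exact Submodule.mem_comap.mp (main hx)

end
end

section
/- Let δ : R → R be a k-linear derivation of the tensor algebra R = T(V) and let q ≥ 0 be such that δ(ι(v)) ∈ Sym^q(L) for every v ∈ V. Then δ(L) ⊆ Sym^q(L), i.e. δ maps the free Lie subalgebra L generated by V into Sym^q(L). -/
/-!
`R = T(V)` is the tensor algebra of a vector space `V` over a field `k` of characteristic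
zero; `freeLie k V` is the smallest Lie subalgebra of `R` (with the commutator bracket)
containing the image of `ι : V → R`, and `symL k V p` is the `k`-linear span of the
symmetrized products `s(β₁,…,β_p) = ∑_{σ ∈ S_p} β_{σ(1)} ⋯ β_{σ(p)}` with `βᵢ ∈ L`
(for `p = 0` this is `k·1`).
-/

section CommAux

variable {A : Type*} [Ring A]

lemma aux_comm_prod (a : A) : ∀ (n : ℕ) (f : Fin n → A),
    a * (List.ofFn f).prod - (List.ofFn f).prod * a =
    ∑ j : Fin n, (List.ofFn (Function.update f j (a * f j - f j * a))).prod := by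
  intro n
  induction n with
  | zero => intro f; simp
  | succ n ih =>
    intro f
    have h0 : (List.ofFn (Function.update f 0 (a * f 0 - f 0 * a))) =
        (a * f 0 - f 0 * a) :: List.ofFn (fun i : Fin n => f i.succ) := by
      rw [List.ofFn_succ]
      have hhead : Function.update f 0 (a * f 0 - f 0 * a) 0 = (a * f 0 - f 0 * a) :=
        Function.update_self _ _ _
      have htail : (fun i : Fin n => Function.update f 0 (a * f 0 - f 0 * a) i.succ)
          = (fun i : Fin n => f i.succ) :=
        funext fun i => Function.update_of_ne (Fin.succ_ne_zero i) _ _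
      rw [hhead, htail]
    have hj : ∀ (j : Fin n) (c : A),
        List.ofFn (Function.update f j.succ c) =
          f 0 :: List.ofFn (Function.update (fun i : Fin n => f i.succ) j c) := by
      intro j c
      rw [List.ofFn_succ]
      have hhead : Function.update f j.succ c 0 = f 0 :=
        Function.update_of_ne (Fin.succ_ne_zero j).symm _ _
      have htail : (fun i : Fin n => Function.update f j.succ c i.succ)
          = Function.update (fun i : Fin n => f i.succ) j c := by
        funext i
        rcases eq_or_ne i j with rfl | h
        · simp
        · rw [Function.update_of_ne (fun hs => h (Fin.succ_injective _ hs)),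
            Function.update_of_ne h]
      rw [hhead, htail]
    rw [Fin.sum_univ_succ, h0, List.ofFn_succ, List.prod_cons, List.prod_cons]
    have := ih (fun i : Fin n => f i.succ)
    calc a * (f 0 * (List.ofFn fun i : Fin n => f i.succ).prod)
          - f 0 * (List.ofFn fun i : Fin n => f i.succ).prod * a
        = (a * f 0 - f 0 * a) * (List.ofFn fun i : Fin n => f i.succ).prod
          + f 0 * (a * (List.ofFn fun i : Fin n => f i.succ).prod
              - (List.ofFn fun i : Fin n => f i.succ).prod * a) := by noncomm_ring
      _ = (a * f 0 - f 0 * a) * (List.ofFn fun i : Fin n => f i.succ).prod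
          + ∑ j : Fin n, f 0 *
              (List.ofFn (Function.update (fun i : Fin n => f i.succ) j
                (a * f j.succ - f j.succ * a))).prod := by
            rw [this, Finset.mul_sum]
      _ = _ := by
            congr 1
            apply Finset.sum_congr rfl
            intro j _
            rw [hj j, List.prod_cons]

lemma aux_comm_sym (a : A) (n : ℕ) (β : Fin n → A) :
    a * (∑ σ : Equiv.Perm (Fin n), (List.ofFn fun i => β (σ i)).prod)
      - (∑ σ : Equiv.Perm (Fin n), (List.ofFn fun i => β (σ i)).prod) * a
    = ∑ i : Fin n, ∑ σ : Equiv.Perm (Fin n),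
        (List.ofFn fun l => (Function.update β i (a * β i - β i * a)) (σ l)).prod := by
  rw [Finset.mul_sum, Finset.sum_mul, ← Finset.sum_sub_distrib, Finset.sum_comm]
  apply Finset.sum_congr rfl
  intro σ _
  have h1 := aux_comm_prod a n (fun i => β (σ i))
  rw [h1]
  rw [← Equiv.sum_comp σ (fun i : Fin n =>
      (List.ofFn fun l => (Function.update β i (a * β i - β i * a)) (σ l)).prod)]
  apply Finset.sum_congr rfl
  intro j _
  congr 1
  have : Function.update β (σ j) (a * β (σ j) - β (σ j) * a) ∘ σ
      = Function.update (β ∘ σ) j (a * β (σ j) - β (σ j) * a) :=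
    Function.update_comp_eq_of_injective β σ.injective j _
  calc List.ofFn (Function.update (fun i => β (σ i)) j (a * β (σ j) - β (σ j) * a))
      = List.ofFn (Function.update β (σ j) (a * β (σ j) - β (σ j) * a) ∘ σ) := by
        rw [this]; rfl
    _ = _ := rfl

end CommAux

noncomputable section

variable (k : Type*) [Field k] [CharZero k] (V : Type*) [AddCommGroup V] [Module k V]

attribute [local instance] LieRing.ofAssociativeRing

lemma symL_stable (q : ℕ) (a : TensorAlgebra k V) (ha : a ∈ freeLie k V) :
    ∀ x ∈ symL k V q, a * x - x * a ∈ symL k V q := by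
  intro x hx
  let T : TensorAlgebra k V →ₗ[k] TensorAlgebra k V :=
    LinearMap.mulLeft k a - LinearMap.mulRight k a
  have hT : ∀ y, T y = a * y - y * a := fun y => rfl
  have : symL k V q ≤ Submodule.comap T (symL k V q) := by
    rw [symL, Submodule.span_le]
    rintro y ⟨β, rfl⟩
    simp only [SetLike.mem_coe, Submodule.mem_comap]
    rw [hT, aux_comm_sym a q (fun i => (β i : TensorAlgebra k V))]
    apply Submodule.sum_mem
    intro i _
    apply Submodule.subset_span
    refine ⟨Function.update β i ⟨a * (β i : TensorAlgebra k V) - (β i) * a, ?_⟩, ?_⟩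
    · have := (freeLie k V).lie_mem ha (β i).2
      rwa [Ring.lie_def] at this
    · apply Finset.sum_congr rfl
      intro σ _
      congr 1
      congr 1
      funext l
      rcases eq_or_ne (σ l) i with h | h
      · rw [h, Function.update_self, Function.update_self]
      · rw [Function.update_of_ne h, Function.update_of_ne h]
  exact this hx

/-- If `δ : R → R` is a `k`-linear derivation of the tensor algebra `R = T(V)`
with `δ(ι v) ∈ Sym^q(L)` for all `v ∈ V`, then `δ(L) ⊆ Sym^q(L)`, i.e. `δ` maps the free Lie
subalgebra `L` generated by `V` into `Sym^q(L)`. -/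
theorem statement5 (δ : TensorAlgebra k V →ₗ[k] TensorAlgebra k V)
    (hder : ∀ a b : TensorAlgebra k V, δ (a * b) = δ a * b + a * δ b)
    (q : ℕ) (hq : ∀ v : V, δ (TensorAlgebra.ι k v) ∈ symL k V q) :
    ∀ x ∈ freeLie k V, δ x ∈ symL k V q := by
  let M : Submodule k (TensorAlgebra k V) :=
    (freeLie k V).toSubmodule ⊓ (symL k V q).comap δ
  let K : LieSubalgebra k (TensorAlgebra k V) :=
    { M with
      lie_mem' := by
        intro x y hx hy
        obtain ⟨hxL, hxS⟩ := hx
        obtain ⟨hyL, hyS⟩ := hy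
        constructor
        · exact (freeLie k V).lie_mem hxL hyL
        · show δ ⁅x, y⁆ ∈ symL k V q
          rw [Ring.lie_def, map_sub, hder, hder]
          have h1 : x * δ y - δ y * x ∈ symL k V q := symL_stable k V q x hxL _ hyS
          have h2 : δ x * y - y * δ x ∈ symL k V q := by
            have := symL_stable k V q y hyL _ hxS
            have h := (symL k V q).neg_mem this
            rwa [neg_sub] at h
          have : δ x * y + x * δ y - (δ y * x + y * δ x)
              = (δ x * y - y * δ x) + (x * δ y - δ y * x) := by abel
          rw [this]
          exact (symL k V q).add_mem h2 h1 }
  intro x hx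
  have hle : freeLie k V ≤ K := by
    rw [freeLie]
    apply LieSubalgebra.lieSpan_le.mpr
    rintro _ ⟨v, rfl⟩
    exact ⟨LieSubalgebra.subset_lieSpan ⟨v, rfl⟩, hq v⟩
  exact (hle hx).2

end
end
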